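/- arXiv:2402.05886 — 6 statements merged into one kernel-verified Lean document; each statement's English description precedes it below -/
import Mathlib

section
/- Let A = [[a₁₁, a₁₂],[a₂₁, a₂₂]] be a real 2×2 matrix with det A > 0 and tr A < 0. Then the symmetric matrix P = [[p, q],[q, r]] with p = −(a₂₂² + a₂₁² + det A)/(2 tr(A) det(A)), q = (a₁₂a₂₂ + a₂₁a₁₁)/(2 tr(A) det(A)), r = −(a₁₂² + a₁₁² + det A)/(2 tr(A) det(A)) satisfies the Riccati (Lyapunov) equation P A + Aᵀ P = −I, and P is the unique solution of this equation. -/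
open Matrix
set_option maxHeartbeats 1000000 in

/-- **Explicit solution of the 2×2 Lyapunov/Riccati equation** `PA + AᵀP = −I`
for a matrix with positive determinant and negative trace, and its uniqueness. -/
theorem stmt_3 (a11 a12 a21 a22 : ℝ)
    (A : Matrix (Fin 2) (Fin 2) ℝ) (hA : A = !![a11, a12; a21, a22])
    (hdet : 0 < A.det) (htr : A.trace < 0)
    (p q r : ℝ)
    (hp : p = -((a22 ^ 2 + a21 ^ 2 + A.det) / (2 * A.trace * A.det)))
    (hq : q = (a12 * a22 + a21 * a11) / (2 * A.trace * A.det))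
    (hr : r = -((a12 ^ 2 + a11 ^ 2 + A.det) / (2 * A.trace * A.det)))
    (P : Matrix (Fin 2) (Fin 2) ℝ) (hP : P = !![p, q; q, r]) :
    P * A + Aᵀ * P = -1 ∧
    ∀ Q : Matrix (Fin 2) (Fin 2) ℝ, Q * A + Aᵀ * Q = -1 → Q = P := by
  subst hA hP
  have hdet' : (!![a11, a12; a21, a22]).det = a11 * a22 - a12 * a21 := by
    simp [Matrix.det_fin_two_of]
  have htr' : (!![a11, a12; a21, a22]).trace = a11 + a22 := by
    simp [Matrix.trace_fin_two_of]
  rw [hdet'] at hdet hp hq hr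
  rw [htr'] at htr hp hq hr
  have hd0 : a11 * a22 - a12 * a21 ≠ 0 := ne_of_gt hdet
  have ht0 : a11 + a22 ≠ 0 := ne_of_lt htr
  have h2td : 2 * (a11 + a22) * (a11 * a22 - a12 * a21) ≠ 0 := by positivity
  have h4td : 4 * (a11 + a22) * (a11 * a22 - a12 * a21) ≠ 0 := by positivity
  -- polynomial forms of the entry definitions
  have hp' : 2 * (a11 + a22) * (a11 * a22 - a12 * a21) * p
      = -(a22 ^ 2 + a21 ^ 2 + (a11 * a22 - a12 * a21)) := by
    rw [hp]; field_simp
  have hq' : 2 * (a11 + a22) * (a11 * a22 - a12 * a21) * q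
      = a12 * a22 + a21 * a11 := by
    rw [hq]; field_simp
  have hr' : 2 * (a11 + a22) * (a11 * a22 - a12 * a21) * r
      = -(a12 ^ 2 + a11 ^ 2 + (a11 * a22 - a12 * a21)) := by
    rw [hr]; field_simp
  have htA : (!![a11, a12; a21, a22])ᵀ = !![a11, a21; a12, a22] := by
    ext i j; fin_cases i <;> fin_cases j <;> rfl
  have key : (!![p, q; q, r] : Matrix (Fin 2) (Fin 2) ℝ) * !![a11, a12; a21, a22] +
      (!![a11, a12; a21, a22])ᵀ * !![p, q; q, r] = -1 := by
    rw [htA]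
    ext i j
    fin_cases i <;> fin_cases j <;>
      simp [Matrix.mul_apply, Fin.sum_univ_two]
    · apply mul_left_cancel₀ h2td
      linear_combination 2 * a11 * hp' + 2 * a21 * hq'
    · apply mul_left_cancel₀ h2td
      linear_combination a12 * hp' + (a11 + a22) * hq' + a21 * hr'
    · apply mul_left_cancel₀ h2td
      linear_combination a12 * hp' + (a11 + a22) * hq' + a21 * hr'
    · apply mul_left_cancel₀ h2td
      linear_combination 2 * a12 * hq' + 2 * a22 * hr'
  refine ⟨key, ?_⟩
  intro Q hQ
  rw [htA] at hQ
  have hQ' : Q = !![Q 0 0, Q 0 1; Q 1 0, Q 1 1] := by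
    ext i j; fin_cases i <;> fin_cases j <;> rfl
  rw [hQ'] at hQ
  have e00 := congrFun (congrFun hQ 0) 0
  have e01 := congrFun (congrFun hQ 0) 1
  have e10 := congrFun (congrFun hQ 1) 0
  have e11 := congrFun (congrFun hQ 1) 1
  simp [Matrix.mul_apply, Fin.sum_univ_two] at e00 e01 e10 e11
  have hz : Q 1 0 = Q 0 1 := by
    apply mul_left_cancel₀ ht0
    linear_combination e10 - e01
  rw [hz] at e00 e11
  have hx : Q 0 0 = p := by
    apply mul_left_cancel₀ h4td
    linear_combination (2 * (a11 + a22) * a22 - 2 * a12 * a21) * e00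
      + (-4 * a21 * a22) * e01 + (2 * a21 ^ 2) * e11 + (-2) * hp'
  have hy : Q 0 1 = q := by
    apply mul_left_cancel₀ h4td
    linear_combination (-2 * a12 * a22) * e00 + (4 * a11 * a22) * e01
      + (-2 * a11 * a21) * e11 + (-2) * hq'
  have hw : Q 1 1 = r := by
    apply mul_left_cancel₀ h4td
    linear_combination (2 * a12 ^ 2) * e00 + (-4 * a11 * a12) * e01
      + (2 * (a11 * (a11 + a22) - a12 * a21)) * e11 + (-2) * hr'
  rw [hQ']
  rw [hx, hy, hz, hw]
  rw [hy]
end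

section
/- Let A : [0,1] → M₂(ℝ) be of the form A(α) = [[a₁₁(α), a₁₂],[a₂₁, a₂₂]] where a₁₁ : [0,1] → ℝ is differentiable and a₁₂, a₂₁, a₂₂ are constants, and suppose (i) a₂₂ < 0, (ii) det A(α) > 0 for all α ∈ [0,1], and (iii) tr A(α) < 0 for all α ∈ [0,1]. Let P(α) be the unique solution of P(α)A(α) + A(α)ᵀP(α) = −I. Then there exists a universal constant C₀ > 0, not depending on the coefficients of A, such that for all α ∈ [0,1]: |a₁₁′(α)|/(2 tr(A(α))²) ≤ ‖P′(α)‖₂ ≤ C₀ |a₁₁′(α)| ‖A(α)‖₂⁴/(tr(A(α)) det(A(α)))². -/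
/-!
Write `τ = tr A`, `δ = det A` and `L X = X A + Aᵀ X`. For a `2 × 2` matrix the adjugate is
`M = τ • 1 - A` and `A M = δ • 1`, so every `X` is recovered from `L X` as
`2 τ δ • X = δ • L X + Mᵀ (L X) M`. Differentiating the Lyapunov equation gives
`L P' = -(P A' + A'ᵀ P)` with `A' = a₁₁' E₁₁`. Since `‖M‖ = ‖A‖` and `2 |δ| ≤ ‖A‖²`,
submultiplicativity of the Frobenius norm bounds first `‖P‖` and then `‖P'‖`. For the lower bound,
the `(0,0)` entry is `(2 τ δ)² P'₀₀ = 2 a₁₁' (δ² + (a₂₁² + a₂₂²)(δ + τ a₂₂))`, where `τ a₂₂ > 0`.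
-/

open Set Matrix

noncomputable def frobNorm (M : Matrix (Fin 2) (Fin 2) ℝ) : ℝ :=
  Real.sqrt (∑ i, ∑ j, M i j ^ 2)

namespace Matrix

section FinTwo

variable {R : Type*} [CommRing R]

theorem add_adjugate_fin_two (A : Matrix (Fin 2) (Fin 2) R) : A + adjugate A = A.trace • 1 := by
  ext i j
  fin_cases i <;> fin_cases j <;> simp [adjugate_fin_two, trace_fin_two, add_comm]

theorem two_mul_trace_mul_det_smul_fin_two (A X : Matrix (Fin 2) (Fin 2) R) :
    (2 * A.trace * A.det) • X =
      A.det • (X * A + Aᵀ * X) + (adjugate A)ᵀ * (X * A + Aᵀ * X) * adjugate A := by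
  set M := adjugate A
  have hAM : A * M = A.det • 1 := mul_adjugate A
  have hMA : Mᵀ * Aᵀ = A.det • 1 := by rw [← transpose_mul, hAM]; simp
  calc (2 * A.trace * A.det) • X
      = A.det • (X * (A + M) + (A + M)ᵀ * X) := by
        rw [add_adjugate_fin_two]
        simp only [transpose_smul, transpose_one, Matrix.mul_smul, Matrix.smul_mul,
          Matrix.mul_one, Matrix.one_mul]
        module
    _ = A.det • (X * A + Aᵀ * X) + (Mᵀ * X * (A * M) + (Mᵀ * Aᵀ) * X * M) := by
        simp only [Matrix.mul_add, transpose_add, Matrix.add_mul, smul_add]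
        simp only [hAM, hMA, Matrix.mul_smul, Matrix.smul_mul, Matrix.mul_one, Matrix.one_mul]
        abel
    _ = _ := by simp only [Matrix.mul_add, Matrix.add_mul, Matrix.mul_assoc]

theorem lyapunov_deriv_apply_zero_zero_fin_two (x b c d v : R) (P Q : Matrix (Fin 2) (Fin 2) R)
    (hP : P * !![x, b; c, d] + (!![x, b; c, d])ᵀ * P = -1)
    (hQ : Q * !![x, b; c, d] + (!![x, b; c, d])ᵀ * Q =
      -(P * !![v, 0; 0, 0] + (!![v, 0; 0, 0])ᵀ * P)) :
    (2 * (x + d) * (x * d - b * c)) ^ 2 * Q 0 0 =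
      2 * v * ((x * d - b * c) ^ 2 + (c ^ 2 + d ^ 2) * (x * d - b * c + (x + d) * d)) := by
  have hQ₀₀ := congrFun (congrFun (two_mul_trace_mul_det_smul_fin_two !![x, b; c, d] Q) 0) 0
  have hP₀₀ := congrFun (congrFun (two_mul_trace_mul_det_smul_fin_two !![x, b; c, d] P) 0) 0
  have hP₀₁ := congrFun (congrFun (two_mul_trace_mul_det_smul_fin_two !![x, b; c, d] P) 0) 1
  have hP₁₀ := congrFun (congrFun (two_mul_trace_mul_det_smul_fin_two !![x, b; c, d] P) 1) 0
  rw [hQ] at hQ₀₀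
  rw [hP] at hP₀₀ hP₀₁ hP₁₀
  simp only [trace_fin_two_of, det_fin_two_of, adjugate_fin_two_of, smul_apply, smul_eq_mul,
    Matrix.add_apply, Matrix.neg_apply, mul_apply, transpose_apply, of_apply, cons_val',
    cons_val_zero, cons_val_one, cons_val_fin_one, Fin.sum_univ_two, one_apply_eq,
    one_apply_ne zero_ne_one, one_apply_ne one_ne_zero] at hQ₀₀ hP₀₀ hP₀₁ hP₁₀
  linear_combination 2 * (x + d) * (x * d - b * c) * hQ₀₀
    - 2 * v * (x * d - b * c + d ^ 2) * hP₀₀ + v * c * d * (hP₀₁ + hP₁₀)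

end FinTwo

theorem abs_div_le_abs_lyapunov_deriv_apply_zero_zero {x b c d v : ℝ}
    {P Q : Matrix (Fin 2) (Fin 2) ℝ} (hd : d < 0) (hτ : x + d < 0) (hδ : 0 < x * d - b * c)
    (hP : P * !![x, b; c, d] + (!![x, b; c, d])ᵀ * P = -1)
    (hQ : Q * !![x, b; c, d] + (!![x, b; c, d])ᵀ * Q =
      -(P * !![v, 0; 0, 0] + (!![v, 0; 0, 0])ᵀ * P)) :
    |v| / (2 * (x + d) ^ 2) ≤ |Q 0 0| := by
  have hQ₀₀ := congrArg abs (lyapunov_deriv_apply_zero_zero_fin_two x b c d v P Q hP hQ)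
  have hN : (x * d - b * c) ^ 2 ≤
      (x * d - b * c) ^ 2 + (c ^ 2 + d ^ 2) * (x * d - b * c + (x + d) * d) := by
    have hτd : 0 < (x + d) * d := mul_pos_of_neg_of_neg hτ hd
    nlinarith [sq_nonneg c, sq_nonneg d]
  rw [abs_mul, abs_mul, abs_mul, abs_two, abs_of_nonneg (by positivity),
    abs_of_nonneg ((sq_nonneg _).trans hN)] at hQ₀₀
  have hmul : |v| * (x * d - b * c) ^ 2 ≤ |Q 0 0| * (2 * (x + d) ^ 2) * (x * d - b * c) ^ 2 := by
    nlinarith [mul_le_mul_of_nonneg_left hN (abs_nonneg v)]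
  rw [div_le_iff₀ (by nlinarith)]
  exact le_of_mul_le_mul_right hmul (by positivity)

section Calculus

variable {l m n : Type*} [Fintype m] {s : Set ℝ} {x : ℝ}

theorem hasDerivWithinAt_mul_apply {P : ℝ → Matrix l m ℝ} {Q : ℝ → Matrix m n ℝ}
    {P' : Matrix l m ℝ} {Q' : Matrix m n ℝ}
    (hP : ∀ i j, HasDerivWithinAt (fun y => P y i j) (P' i j) s x)
    (hQ : ∀ i j, HasDerivWithinAt (fun y => Q y i j) (Q' i j) s x) (i : l) (j : n) :
    HasDerivWithinAt (fun y => (P y * Q y) i j) ((P' * Q x + P x * Q') i j) s x := by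
  simp only [mul_apply, Matrix.add_apply, ← Finset.sum_add_distrib]
  exact HasDerivWithinAt.fun_sum fun k _ => (hP i k).mul (hQ k j)

theorem mul_add_transpose_mul_eq_of_hasDerivWithinAt {A P : ℝ → Matrix m m ℝ}
    {A' P' C : Matrix m m ℝ} (hs : UniqueDiffWithinAt ℝ s x) (hx : x ∈ s)
    (hA : ∀ i j, HasDerivWithinAt (fun y => A y i j) (A' i j) s x)
    (hP : ∀ i j, HasDerivWithinAt (fun y => P y i j) (P' i j) s x)
    (hC : ∀ y ∈ s, P y * A y + (A y)ᵀ * P y = C) :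
    P' * A x + (A x)ᵀ * P' = -(P x * A' + A'ᵀ * P x) := by
  ext i j
  have hAt : ∀ i j, HasDerivWithinAt (fun y => (A y)ᵀ i j) (A'ᵀ i j) s x := fun i j => hA j i
  have hderiv := (hasDerivWithinAt_mul_apply hP hA i j).add (hasDerivWithinAt_mul_apply hAt hP i j)
  have hconst : HasDerivWithinAt (fun y => (P y * A y + (A y)ᵀ * P y) i j) 0 s x :=
    (hasDerivWithinAt_const x s (C i j)).congr (fun y hy => by rw [hC y hy]) (by rw [hC x hx])
  have hzero := hs.eq_deriv _ hderiv hconst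
  simp only [Matrix.add_apply, Matrix.neg_apply] at hzero ⊢
  linear_combination hzero

end Calculus

end Matrix

attribute [local instance] Matrix.frobeniusNormedAddCommGroup Matrix.frobeniusNormedSpace

namespace Matrix

theorem frobenius_norm_sq {m n : Type*} [Fintype m] [Fintype n] (M : Matrix m n ℝ) :
    ‖M‖ ^ 2 = ∑ i, ∑ j, M i j ^ 2 := by
  rw [frobenius_norm_def, ← Real.sqrt_eq_rpow, Real.sq_sqrt (by positivity)]
  simp

theorem abs_apply_le_frobenius_norm {m n : Type*} [Fintype m] [Fintype n] (M : Matrix m n ℝ)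
    (i : m) (j : n) : |M i j| ≤ ‖M‖ := by
  rw [← sq_le_sq₀ (abs_nonneg _) (norm_nonneg _), sq_abs, frobenius_norm_sq]
  calc M i j ^ 2 ≤ ∑ j', M i j' ^ 2 :=
        Finset.single_le_sum (fun _ _ => sq_nonneg _) (Finset.mem_univ j)
    _ ≤ ∑ i', ∑ j', M i' j' ^ 2 :=
        Finset.single_le_sum (f := fun i' => ∑ j', M i' j' ^ 2)
          (fun _ _ => Finset.sum_nonneg fun _ _ => sq_nonneg _) (Finset.mem_univ i)

theorem frobenius_norm_adjugate_fin_two (A : Matrix (Fin 2) (Fin 2) ℝ) : ‖adjugate A‖ = ‖A‖ := by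
  rw [← sq_eq_sq₀ (norm_nonneg _) (norm_nonneg _), frobenius_norm_sq, frobenius_norm_sq]
  simp only [adjugate_fin_two, of_apply, cons_val', cons_val_zero, cons_val_one,
    cons_val_fin_one, Fin.sum_univ_two]
  ring

theorem two_mul_abs_det_le_frobenius_norm_sq_fin_two (A : Matrix (Fin 2) (Fin 2) ℝ) :
    2 * |A.det| ≤ ‖A‖ ^ 2 := by
  rw [frobenius_norm_sq, det_fin_two]
  simp only [Fin.sum_univ_two]
  rcases abs_cases (A 0 0 * A 1 1 - A 0 1 * A 1 0) with ⟨h, _⟩ | ⟨h, _⟩ <;> rw [h] <;>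
    nlinarith [sq_nonneg (A 0 0 - A 1 1), sq_nonneg (A 0 0 + A 1 1),
      sq_nonneg (A 0 1 - A 1 0), sq_nonneg (A 0 1 + A 1 0)]

theorem four_mul_abs_trace_mul_det_mul_norm_le_fin_two (A X : Matrix (Fin 2) (Fin 2) ℝ) :
    4 * |A.trace * A.det| * ‖X‖ ≤ 3 * ‖A‖ ^ 2 * ‖X * A + Aᵀ * X‖ := by
  set L := X * A + Aᵀ * X
  have hδ := two_mul_abs_det_le_frobenius_norm_sq_fin_two A
  have hsmul : 2 * |A.trace * A.det| * ‖X‖ ≤ (|A.det| + ‖A‖ ^ 2) * ‖L‖ :=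
    calc 2 * |A.trace * A.det| * ‖X‖ = ‖(2 * A.trace * A.det) • X‖ := by
          simp only [norm_smul, Real.norm_eq_abs, mul_assoc, abs_mul, abs_two]
      _ ≤ ‖A.det • L‖ + ‖(adjugate A)ᵀ * L * adjugate A‖ := by
          rw [two_mul_trace_mul_det_smul_fin_two]; exact norm_add_le _ _
      _ ≤ |A.det| * ‖L‖ + ‖A‖ * ‖L‖ * ‖A‖ := by
          gcongr
          · rw [norm_smul, Real.norm_eq_abs]
          · refine (frobenius_norm_mul _ _).trans ?_
            rw [frobenius_norm_adjugate_fin_two]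
            gcongr
            refine (frobenius_norm_mul _ _).trans ?_
            rw [frobenius_norm_transpose, frobenius_norm_adjugate_fin_two]
      _ = (|A.det| + ‖A‖ ^ 2) * ‖L‖ := by ring
  nlinarith [norm_nonneg L]

theorem sq_trace_mul_det_mul_norm_lyapunov_deriv_le_fin_two {A A' P Q : Matrix (Fin 2) (Fin 2) ℝ}
    (hP : P * A + Aᵀ * P = -1) (hQ : Q * A + Aᵀ * Q = -(P * A' + A'ᵀ * P)) :
    (A.trace * A.det) ^ 2 * ‖Q‖ ≤ 2 * ‖A'‖ * ‖A‖ ^ 4 := by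
  have hP' := four_mul_abs_trace_mul_det_mul_norm_le_fin_two A P
  have hQ' := four_mul_abs_trace_mul_det_mul_norm_le_fin_two A Q
  rw [hP, norm_neg] at hP'
  rw [hQ, norm_neg] at hQ'
  set k := |A.trace * A.det|
  have hR : ‖P * A' + A'ᵀ * P‖ ≤ 2 * ‖P‖ * ‖A'‖ := by
    refine (norm_add_le _ _).trans ?_
    have h₁ := frobenius_norm_mul P A'
    have h₂ := frobenius_norm_mul A'ᵀ P
    rw [frobenius_norm_transpose] at h₂
    linarith
  have h1 : ‖(1 : Matrix (Fin 2) (Fin 2) ℝ)‖ ≤ 3 / 2 := by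
    rw [← sq_le_sq₀ (norm_nonneg _) (by norm_num), frobenius_norm_sq]
    simp only [Fin.sum_univ_two, one_apply_eq, one_apply_ne zero_ne_one, one_apply_ne one_ne_zero]
    norm_num
  calc (A.trace * A.det) ^ 2 * ‖Q‖ = k * (4 * k * ‖Q‖) / 4 := by rw [← sq_abs]; ring
    _ ≤ k * (3 * ‖A‖ ^ 2 * (2 * ‖P‖ * ‖A'‖)) / 4 := by
        gcongr k * ?_ / 4; exact hQ'.trans (by gcongr)
    _ = 3 / 8 * ‖A‖ ^ 2 * ‖A'‖ * (4 * k * ‖P‖) := by ring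
    _ ≤ 3 / 8 * ‖A‖ ^ 2 * ‖A'‖ * (3 * ‖A‖ ^ 2 * (3 / 2)) := by
        gcongr 3 / 8 * ‖A‖ ^ 2 * ‖A'‖ * ?_; exact hP'.trans (by gcongr)
    _ = 27 / 16 * ‖A'‖ * ‖A‖ ^ 4 := by ring
    _ ≤ 2 * ‖A'‖ * ‖A‖ ^ 4 := by gcongr; norm_num

end Matrix

theorem frobNorm_eq_norm (M : Matrix (Fin 2) (Fin 2) ℝ) : frobNorm M = ‖M‖ := by
  rw [frobNorm, ← M.frobenius_norm_sq, Real.sqrt_sq (norm_nonneg M)]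

/-- **Lemma (Derivative estimates for the derivative of the Lyapunov function).**
There is a universal constant `C₀ > 0`, independent of the coefficients of `A`,
such that for any matrix-valued map `A(α) = [[a₁₁(α), a₁₂],[a₂₁, a₂₂]]` on `[0,1]`
with `a₂₂ < 0`, `det A(α) > 0` and `tr A(α) < 0`, the solution `P(α)` of the
Lyapunov equation `P(α)A(α) + A(α)ᵀP(α) = −I` satisfies
`|a₁₁′(α)|/(2 tr(A)²) ≤ ‖P′(α)‖₂ ≤ C₀ |a₁₁′(α)| ‖A‖₂⁴/(tr(A) det(A))²`. -/
theorem stmt_4 : ∃ C₀ > (0:ℝ),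
    ∀ (a11 a11' : ℝ → ℝ) (a12 a21 a22 : ℝ) (A P P' : ℝ → Matrix (Fin 2) (Fin 2) ℝ),
    (∀ α : ℝ, A α = !![a11 α, a12; a21, a22]) →
    (∀ α ∈ Icc (0:ℝ) 1, HasDerivWithinAt a11 (a11' α) (Icc (0:ℝ) 1) α) →
    a22 < 0 →
    (∀ α ∈ Icc (0:ℝ) 1, 0 < (A α).det) →
    (∀ α ∈ Icc (0:ℝ) 1, (A α).trace < 0) →
    (∀ α ∈ Icc (0:ℝ) 1, P α * A α + (A α)ᵀ * P α = -1) →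
    (∀ α ∈ Icc (0:ℝ) 1, ∀ i j,
      HasDerivWithinAt (fun a => P a i j) (P' α i j) (Icc (0:ℝ) 1) α) →
    ∀ α ∈ Icc (0:ℝ) 1,
      |a11' α| / (2 * (A α).trace ^ 2) ≤ frobNorm (P' α) ∧
      frobNorm (P' α) ≤ C₀ * |a11' α| * frobNorm (A α) ^ 4 / ((A α).trace * (A α).det) ^ 2 := by
  refine ⟨2, two_pos, ?_⟩
  intro a11 a11' a12 a21 a22 A P P' hA ha11 ha22 hdet htr hP hP' α hα
  set A' : Matrix (Fin 2) (Fin 2) ℝ := !![a11' α, 0; 0, 0]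
  have hA' : ∀ i j, HasDerivWithinAt (fun β => A β i j) (A' i j) (Icc 0 1) α := by
    intro i j
    simp only [hA]
    fin_cases i <;> fin_cases j <;> simp [A', ha11 α hα, hasDerivWithinAt_const]
  have hQ : P' α * A α + (A α)ᵀ * P' α = -(P α * A' + A'ᵀ * P α) :=
    mul_add_transpose_mul_eq_of_hasDerivWithinAt (uniqueDiffOn_Icc zero_lt_one α hα) hα hA'
      (hP' α hα) hP
  have hτδ : 0 < ((A α).trace * (A α).det) ^ 2 :=
    sq_pos_of_neg (mul_neg_of_neg_of_pos (htr α hα) (hdet α hα))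
  rw [frobNorm_eq_norm, frobNorm_eq_norm]
  constructor
  · have hPα := hP α hα
    have hdetα := hdet α hα
    have htrα := htr α hα
    rw [hA α] at hPα hQ hdetα htrα ⊢
    rw [det_fin_two_of] at hdetα
    rw [trace_fin_two_of] at htrα ⊢
    exact (abs_div_le_abs_lyapunov_deriv_apply_zero_zero ha22 htrα hdetα hPα hQ).trans
      (abs_apply_le_frobenius_norm _ 0 0)
  · have hA'norm : ‖A'‖ = |a11' α| := by
      rw [← frobNorm_eq_norm]
      simp [frobNorm, A', Fin.sum_univ_two, Real.sqrt_sq_eq_abs]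
    rw [le_div_iff₀ hτδ, ← hA'norm]
    linarith [sq_trace_mul_det_mul_norm_lyapunov_deriv_le_fin_two (hP α hα) hQ]
end

section
/- Suppose ε, β, γ, ρ with ε, β, γ > 0 satisfy Condition C1. Then for each α ∈ [0,1] the algebraic system 0 = (1 − α²ρ²/2)X̃₁(α) − X̃₁(α)³/3 − Ỹ₁(α), 0 = X̃₁(α) − γỸ₁(α) + β has a unique solution (X̃₁(α), Ỹ₁(α)), and the following hold: (i) X̃₁(α)² > 1 − α²ρ²/2 for every α ∈ [0,1]; (ii) the functions α ↦ X̃₁(α) and α ↦ Ỹ₁(α) are continuous on [0,1] and differentiable on (0,1) (with one-sided derivatives at α = 0 and α = 1); (iii) on (0,1) the derivatives satisfy X̃₁′(α)·(1 − α²ρ²/2 − X̃₁(α)² − 1/γ) = α ρ² X̃₁(α) and Ỹ₁′(α) = (1/γ)·X̃₁′(α), and the quantity J(α) = γ(X̃₁(α)² − 1 + α²ρ²/2) + 1 is strictly positive for all α ∈ [0,1]. -/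
/-! Eliminating `w = (v + β)/γ` reduces the equilibrium system to the cubic equation
`F_α(v) = 0`, `F_α = equilibriumCubic β γ ρ α`, whose leading coefficient is negative; so `F_α` is
positive left of its unique root `X(α)` and negative right of it. These signs persist at nearby
parameters, which pins `X(α')` near `X(α)`. Subtracting the equations at `α` and `α₀` gives
`(X α - X α₀) · C(α) = K(α) · (α - α₀)` with `C, K` continuous and
`C(α₀) = 1 - α₀²ρ²/2 - X(α₀)² - 1/γ`, which the gap `X(α)² > 1 - α²ρ²/2` of Condition C1 keeps
negative; this yields the derivative. -/

open Set

/-- Condition C1: for every `α ∈ [0,1]` the system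
`v' = (1 − α²ρ²/2)v − v³/3 − w`, `w' = ε(v − γw + β)` has a unique equilibrium,
this equilibrium is stable (negative trace and positive determinant of the
linearization `[[1 − α²ρ²/2 − v₀², −1],[ε, −εγ]]`), and there is `c > 0` with
`v₀(α)² − 1 + α²ρ²/2 > c` uniformly in `α`. -/
def CondC1 (ε β γ ρ : ℝ) : Prop :=
  (∀ α ∈ Icc (0:ℝ) 1, ∃! p : ℝ × ℝ,
    (1 - α ^ 2 * ρ ^ 2 / 2) * p.1 - p.1 ^ 3 / 3 - p.2 = 0 ∧ p.1 - γ * p.2 + β = 0) ∧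
  (∀ α ∈ Icc (0:ℝ) 1, ∀ p : ℝ × ℝ,
    ((1 - α ^ 2 * ρ ^ 2 / 2) * p.1 - p.1 ^ 3 / 3 - p.2 = 0 ∧ p.1 - γ * p.2 + β = 0) →
    (1 - α ^ 2 * ρ ^ 2 / 2 - p.1 ^ 2) - ε * γ < 0 ∧
    (1 - α ^ 2 * ρ ^ 2 / 2 - p.1 ^ 2) * (-(ε * γ)) + ε > 0) ∧
  (∃ c > (0:ℝ), ∀ α ∈ Icc (0:ℝ) 1, ∀ p : ℝ × ℝ,
    ((1 - α ^ 2 * ρ ^ 2 / 2) * p.1 - p.1 ^ 3 / 3 - p.2 = 0 ∧ p.1 - γ * p.2 + β = 0) →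
    p.1 ^ 2 - 1 + α ^ 2 * ρ ^ 2 / 2 > c)

open Filter Topology

theorem IsPreconnected.pos_of_ne_zero {T : Type*} [TopologicalSpace T] {s : Set T} {f : T → ℝ}
    (hs : IsPreconnected s) (hf : ContinuousOn f s) (hf₀ : ∀ x ∈ s, f x ≠ 0)
    {t : T} (ht : t ∈ s) (hft : 0 < f t) {x : T} (hx : x ∈ s) : 0 < f x := by
  by_contra! hfx
  obtain ⟨y, hy, hfy⟩ := hs.intermediate_value hx ht hf ⟨hfx, hft.le⟩
  exact hf₀ y hy hfy

theorem continuousOn_of_sign_change {T : Type*} [TopologicalSpace T] {f : T → ℝ → ℝ}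
    {g : T → ℝ} {s : Set T} (hf : ∀ x, ContinuousOn (fun t => f t x) s)
    (hpos : ∀ t ∈ s, ∀ x < g t, 0 < f t x) (hneg : ∀ t ∈ s, ∀ x, g t < x → f t x < 0) :
    ContinuousOn g s := by
  intro t₀ ht₀
  have hmem : ∀ᶠ t in 𝓝[s] t₀, t ∈ s := self_mem_nhdsWithin
  -- The detour through `a'`, `b'` is needed because nothing is assumed about `f t (g t)`.
  refine tendsto_order.2 ⟨fun a ha => ?_, fun b hb => ?_⟩
  · obtain ⟨a', haa', ha'⟩ := exists_between ha
    filter_upwards [(hf a' t₀ ht₀).eventually_const_lt (hpos t₀ ht₀ a' ha'), hmem] with t ht hts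
    exact haa'.trans_le (not_lt.1 fun h => (hneg t hts a' h).not_gt ht)
  · obtain ⟨b', hb', hb'b⟩ := exists_between hb
    filter_upwards [(hf b' t₀ ht₀).eventually_lt_const (hneg t₀ ht₀ b' hb'), hmem] with t ht hts
    exact (not_lt.1 fun h => (hpos t hts b' h).not_gt ht).trans_lt hb'b

theorem hasDerivWithinAt_of_sub_mul_eq {f C K : ℝ → ℝ} {s : Set ℝ} {x₀ : ℝ}
    (hC : ContinuousWithinAt C s x₀) (hC₀ : C x₀ ≠ 0) (hK : ContinuousWithinAt K s x₀)
    (h : ∀ x ∈ s, (f x - f x₀) * C x = K x * (x - x₀)) :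
    HasDerivWithinAt f (K x₀ / C x₀) s x₀ := by
  rw [hasDerivWithinAt_iff_tendsto_slope]
  refine ((hK.div hC hC₀).mono sdiff_subset).tendsto.congr' ?_
  filter_upwards [(hC.mono sdiff_subset).eventually_ne hC₀, self_mem_nhdsWithin]
    with x hCx ⟨hxs, hx⟩
  rw [Pi.div_apply, slope_def_field, div_eq_div_iff hCx (sub_ne_zero.2 hx)]
  exact (h x hxs).symm

theorem exists_cubic_sign (A B : ℝ) :
    ∃ R, (∀ x ≤ -R, 0 < A * x - x ^ 3 / 3 + B) ∧ ∀ x, R ≤ x → A * x - x ^ 3 / 3 + B < 0 := by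
  set R := 1 + 3 * |A| + 3 * |B|
  have hR : 1 ≤ R := by linarith [abs_nonneg A, abs_nonneg B]
  refine ⟨R, fun x hx => ?_, fun x hx => ?_⟩
  · have hx2 : R ≤ x ^ 2 := by nlinarith
    have hcube : x * x ^ 2 ≤ x * R := mul_le_mul_of_nonpos_left hx2 (by linarith)
    have hA : |A| * x ≤ A * x := mul_le_mul_of_nonpos_right (le_abs_self A) (by linarith)
    have hB : 0 ≤ |B| * (-x - 1) := mul_nonneg (abs_nonneg B) (by linarith)
    linarith [neg_abs_le B]
  · have hx2 : R ≤ x ^ 2 := by nlinarith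
    have hcube : x * R ≤ x * x ^ 2 := mul_le_mul_of_nonneg_left hx2 (by linarith)
    have hA : A * x ≤ |A| * x := mul_le_mul_of_nonneg_right (le_abs_self A) (by linarith)
    have hB : 0 ≤ |B| * (x - 1) := mul_nonneg (abs_nonneg B) (by linarith)
    linarith [le_abs_self B]

noncomputable def equilibriumCubic (β γ ρ α x : ℝ) : ℝ :=
  (1 - α ^ 2 * ρ ^ 2 / 2) * x - x ^ 3 / 3 - (x + β) / γ

theorem equilibrium_iff {β γ ρ α x y : ℝ} (hγ : γ ≠ 0) :
    ((1 - α ^ 2 * ρ ^ 2 / 2) * x - x ^ 3 / 3 - y = 0 ∧ x - γ * y + β = 0) ↔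
      equilibriumCubic β γ ρ α x = 0 ∧ y = (x + β) / γ := by
  constructor
  · rintro ⟨hv, hw⟩
    have hy : y = (x + β) / γ := by
      field_simp
      linarith
    exact ⟨by rw [equilibriumCubic, ← hy]; exact hv, hy⟩
  · rintro ⟨hF, rfl⟩
    exact ⟨hF, by field_simp; ring⟩

theorem exists_equilibriumCubic_sign (β γ ρ α : ℝ) :
    ∃ R, (∀ x ≤ -R, 0 < equilibriumCubic β γ ρ α x) ∧
      ∀ x, R ≤ x → equilibriumCubic β γ ρ α x < 0 := by
  have hF : ∀ x, equilibriumCubic β γ ρ α x =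
      (1 - α ^ 2 * ρ ^ 2 / 2 - 1 / γ) * x - x ^ 3 / 3 + -(β / γ) := fun x => by
    rw [equilibriumCubic]; ring
  simpa only [hF] using exists_cubic_sign (1 - α ^ 2 * ρ ^ 2 / 2 - 1 / γ) (-(β / γ))

section UniqueRoot

variable {β γ ρ : ℝ} {X : ℝ → ℝ} {s : Set ℝ}

theorem equilibriumCubic_pos_of_lt (hroot : ∀ α ∈ s, ∀ x, equilibriumCubic β γ ρ α x = 0 ↔ x = X α)
    {α x : ℝ} (hα : α ∈ s) (hx : x < X α) : 0 < equilibriumCubic β γ ρ α x := by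
  obtain ⟨R, hR, -⟩ := exists_equilibriumCubic_sign β γ ρ α
  have hRX : -R < X α := by
    by_contra! h
    exact (hR _ h).ne' ((hroot α hα _).2 rfl)
  exact isPreconnected_Iio.pos_of_ne_zero (by unfold equilibriumCubic; fun_prop)
    (fun y hy h0 => (mem_Iio.1 hy).ne ((hroot α hα y).1 h0)) hRX (hR _ le_rfl) hx

theorem equilibriumCubic_neg_of_gt (hroot : ∀ α ∈ s, ∀ x, equilibriumCubic β γ ρ α x = 0 ↔ x = X α)
    {α x : ℝ} (hα : α ∈ s) (hx : X α < x) : equilibriumCubic β γ ρ α x < 0 := by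
  obtain ⟨R, -, hR⟩ := exists_equilibriumCubic_sign β γ ρ α
  have hXR : X α < R := by
    by_contra! h
    exact (hR _ h).ne ((hroot α hα _).2 rfl)
  exact neg_pos.1 <| isPreconnected_Ioi.pos_of_ne_zero
    (f := fun y => -equilibriumCubic β γ ρ α y) (by unfold equilibriumCubic; fun_prop)
    (fun y hy h0 => (mem_Ioi.1 hy).ne' ((hroot α hα y).1 (neg_eq_zero.1 h0))) hXR
    (neg_pos.2 (hR _ le_rfl)) hx

theorem continuousOn_of_equilibriumCubic (hroot : ∀ α ∈ s, ∀ x, equilibriumCubic β γ ρ α x = 0 ↔ x = X α) : ContinuousOn X s :=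
  continuousOn_of_sign_change (fun x => by unfold equilibriumCubic; fun_prop)
    (fun _ hα _ => equilibriumCubic_pos_of_lt hroot hα)
    (fun _ hα _ => equilibriumCubic_neg_of_gt hroot hα)

theorem hasDerivWithinAt_of_equilibriumCubic
    (hroot : ∀ α ∈ s, equilibriumCubic β γ ρ α (X α) = 0) (hX : ContinuousOn X s)
    {α₀ : ℝ} (hα₀ : α₀ ∈ s) (hD : 1 - α₀ ^ 2 * ρ ^ 2 / 2 - X α₀ ^ 2 - 1 / γ ≠ 0) :
    HasDerivWithinAt X (α₀ * ρ ^ 2 * X α₀ / (1 - α₀ ^ 2 * ρ ^ 2 / 2 - X α₀ ^ 2 - 1 / γ))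
      s α₀ := by
  have hXc := hX α₀ hα₀
  have key := hasDerivWithinAt_of_sub_mul_eq (f := X)
    (C := fun α => 1 - α₀ ^ 2 * ρ ^ 2 / 2 - 1 / γ - (X α ^ 2 + X α * X α₀ + X α₀ ^ 2) / 3)
    (K := fun α => X α * (α + α₀) * ρ ^ 2 / 2) (by fun_prop) (by convert hD using 1; ring)
    (by fun_prop) fun α hα => by
      have h := hroot α hα
      have h₀ := hroot α₀ hα₀
      unfold equilibriumCubic at h h₀
      linear_combination h - h₀
  convert key using 2 <;> ring

end UniqueRoot

theorem stmt_5_general (ε β γ ρ : ℝ) (hγ : 0 < γ)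
    (hC1 : CondC1 ε β γ ρ) :
    (∀ α ∈ Icc (0:ℝ) 1, ∃! p : ℝ × ℝ,
      (1 - α ^ 2 * ρ ^ 2 / 2) * p.1 - p.1 ^ 3 / 3 - p.2 = 0 ∧ p.1 - γ * p.2 + β = 0) ∧
    ∀ X Y : ℝ → ℝ,
      (∀ α ∈ Icc (0:ℝ) 1,
        (1 - α ^ 2 * ρ ^ 2 / 2) * X α - X α ^ 3 / 3 - Y α = 0 ∧ X α - γ * Y α + β = 0) →
      (∀ α ∈ Icc (0:ℝ) 1, X α ^ 2 > 1 - α ^ 2 * ρ ^ 2 / 2) ∧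
      ContinuousOn X (Icc 0 1) ∧ ContinuousOn Y (Icc 0 1) ∧
      (∀ α ∈ Icc (0:ℝ) 1, DifferentiableWithinAt ℝ X (Icc (0:ℝ) 1) α ∧
        DifferentiableWithinAt ℝ Y (Icc (0:ℝ) 1) α) ∧
      (∀ α ∈ Ioo (0:ℝ) 1, ∃ dX dY : ℝ, HasDerivAt X dX α ∧ HasDerivAt Y dY α ∧
        dX * (1 - α ^ 2 * ρ ^ 2 / 2 - X α ^ 2 - 1 / γ) = α * ρ ^ 2 * X α ∧
        dY = (1 / γ) * dX) ∧
      (∀ α ∈ Icc (0:ℝ) 1, 0 < γ * (X α ^ 2 - 1 + α ^ 2 * ρ ^ 2 / 2) + 1) := by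
  obtain ⟨hU, -, c, hc, hbound⟩ := hC1
  refine ⟨hU, fun X Y hXY => ?_⟩
  have hsys α (hα : α ∈ Icc (0:ℝ) 1) := (equilibrium_iff hγ.ne').1 (hXY α hα)
  have hroot : ∀ α ∈ Icc (0:ℝ) 1, ∀ x, equilibriumCubic β γ ρ α x = 0 ↔ x = X α :=
    fun α hα x => ⟨fun hx => congrArg Prod.fst <| (hU α hα).unique (y₁ := (x, (x + β) / γ))
      (y₂ := (X α, Y α)) ((equilibrium_iff hγ.ne').2 ⟨hx, rfl⟩) (hXY α hα),
      fun hx => hx ▸ (hsys α hα).1⟩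
  have hgap α (hα : α ∈ Icc (0:ℝ) 1) : 0 < X α ^ 2 - 1 + α ^ 2 * ρ ^ 2 / 2 :=
    hc.trans (hbound α hα (X α, Y α) (hXY α hα))
  have hD α (hα : α ∈ Icc (0:ℝ) 1) : 1 - α ^ 2 * ρ ^ 2 / 2 - X α ^ 2 - 1 / γ < 0 := by
    linarith [hgap α hα, one_div_pos.2 hγ]
  have hX := continuousOn_of_equilibriumCubic hroot
  have hX' α (hα : α ∈ Icc (0:ℝ) 1) := hasDerivWithinAt_of_equilibriumCubic
    (fun α hα => (hsys α hα).1) hX hα (hD α hα).ne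
  have hY' α (hα : α ∈ Icc (0:ℝ) 1) := (((hX' α hα).add_const β).div_const γ).congr
    (fun α hα => (hsys α hα).2) (hsys α hα).2
  refine ⟨fun α hα => by linarith [hgap α hα],
    hX, ((hX.add_const β).div_const γ).congr fun α hα => (hsys α hα).2,
    fun α hα => ⟨(hX' α hα).differentiableWithinAt, (hY' α hα).differentiableWithinAt⟩,
    fun α hα => ?_, fun α hα => by linarith [mul_pos hγ (hgap α hα)]⟩
  have hIcc : Icc (0:ℝ) 1 ∈ 𝓝 α := Icc_mem_nhds hα.1 hα.2
  exact ⟨_, _, (hX' α (Ioo_subset_Icc_self hα)).hasDerivAt hIcc,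
    (hY' α (Ioo_subset_Icc_self hα)).hasDerivAt hIcc,
    div_mul_cancel₀ _ (hD α (Ioo_subset_Icc_self hα)).ne, by ring⟩

/-- **Lemma (Properties of the algebraic system, steering problem 1).** -/
theorem stmt_5 (ε β γ ρ : ℝ) (hε : 0 < ε) (hβ : 0 < β) (hγ : 0 < γ)
    (hC1 : CondC1 ε β γ ρ) :
    (∀ α ∈ Icc (0:ℝ) 1, ∃! p : ℝ × ℝ,
      (1 - α ^ 2 * ρ ^ 2 / 2) * p.1 - p.1 ^ 3 / 3 - p.2 = 0 ∧ p.1 - γ * p.2 + β = 0) ∧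
    ∀ X Y : ℝ → ℝ,
      (∀ α ∈ Icc (0:ℝ) 1,
        (1 - α ^ 2 * ρ ^ 2 / 2) * X α - X α ^ 3 / 3 - Y α = 0 ∧ X α - γ * Y α + β = 0) →
      (∀ α ∈ Icc (0:ℝ) 1, X α ^ 2 > 1 - α ^ 2 * ρ ^ 2 / 2) ∧
      ContinuousOn X (Icc 0 1) ∧ ContinuousOn Y (Icc 0 1) ∧
      (∀ α ∈ Icc (0:ℝ) 1, DifferentiableWithinAt ℝ X (Icc (0:ℝ) 1) α ∧
        DifferentiableWithinAt ℝ Y (Icc (0:ℝ) 1) α) ∧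
      (∀ α ∈ Ioo (0:ℝ) 1, ∃ dX dY : ℝ, HasDerivAt X dX α ∧ HasDerivAt Y dY α ∧
        dX * (1 - α ^ 2 * ρ ^ 2 / 2 - X α ^ 2 - 1 / γ) = α * ρ ^ 2 * X α ∧
        dY = (1 / γ) * dX) ∧
      (∀ α ∈ Icc (0:ℝ) 1, 0 < γ * (X α ^ 2 - 1 + α ^ 2 * ρ ^ 2 / 2) + 1) :=
  stmt_5_general ε β γ ρ hγ hC1
end

section
/- Fix T > 0, ω₀ > 0 and parameters ε, β, γ, ρ with ε > 0, β > 0, γ > 1. For each ω ≥ ω₀ let φ_slow, φ_fast, φ₂, HF₁, HF₂ ∈ C([0,T];ℝ) (possibly depending on ω) satisfy: (i) (1/γ)·sup_{t∈[0,T]} ∫₀ᵗ exp(∫_τᵗ (φ_slow(s) + φ_fast(s)) ds) dτ < 1/2; (ii) sup_{t∈[0,T]} |∫₀ᵗ exp(∫_τᵗ (φ_slow(s) + φ_fast(s)) ds)·HF₁(τ) dτ| ≤ C₁/ω; (iii) sup_{t∈[0,T]} |∫₀ᵗ e^{−εγ(t−τ)}·HF₂(τ) dτ| ≤ C₂/ω;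 (iv) sup_{t∈[0,T]} |φ₂(t)| ≤ K₂; where C₁ = C₁(T,ω₀) > 0, C₂ = C₂(T,ω₀) > 0, K₂ = K₂(T) > 0 are constants independent of ω. Then there exist ω* ≥ ω₀ and a constant C = C(C₁,C₂,γ) > 0 such that for all ω ≥ ω*, the solution (E_v, E_w) ∈ C([0,T];ℝ²) ∩ C¹((0,T);ℝ²) of the system E_v′ = (φ_slow + φ_fast)E_v + φ₂E_v² − (1/3)E_v³ − E_w + HF₁, E_w′ = ε(E_v − γE_w) + HF₂ with E_v(0) = 0, E_w(0) = 0 satisfies |E_v(t)| ≤ C/ω and |E_w(t)| ≤ C/ω for all t ∈ (0,T). -/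
/-!
Both components solve scalar linear equations forced by the rest of the system, so by variation
of constants each is a kernel integral of its forcing: `E_w` with kernel `exp (-εγ(t - τ))`, of
total mass at most `1/(εγ)`, and `E_v` with kernel `exp ∫_τ^t (φ_slow + φ_fast)`, of mass below
`γ/2` by (i). Hence while `|E_v| ≤ δ` on `[0, t]` we get `|E_w| ≤ δ/γ + C₂/ω` there, and the cubic
forcing of `E_v` gives `|E_v t| ≤ (γ/2)(K₂δ² + δ³/3 + δ/γ + C₂/ω) + C₁/ω`, which is `< δ` for
`δ = (2γC₂ + 4C₁)/ω` once `ω ≥ 2γ(K₂ + 1)(2γC₂ + 4C₁)`. A continuous-induction argument then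
keeps `|E_v| ≤ δ` on all of `[0, T]`.
-/

open Set intervalIntegral MeasureTheory Filter Topology Real

theorem hasDerivAt_integral_of_continuousOn {f : ℝ → ℝ} {a b x : ℝ}
    (hf : ContinuousOn f (Icc a b)) (hx : x ∈ Ioo a b) :
    HasDerivAt (fun t => ∫ s in a..t, f s) (f x) x :=
  integral_hasDerivAt_right
    ((hf.mono (Icc_subset_Icc_right hx.2.le)).intervalIntegrable_of_Icc hx.1.le)
    ((hf.mono Ioo_subset_Icc_self).stronglyMeasurableAtFilter isOpen_Ioo x hx)
    (hf.continuousAt (Icc_mem_nhds hx.1 hx.2))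

theorem continuousOn_integral_of_continuousOn {f : ℝ → ℝ} {a b : ℝ}
    (hf : ContinuousOn f (Icc a b)) : ContinuousOn (fun t => ∫ s in a..t, f s) (Icc a b) := by
  rcases le_or_gt a b with hab | hab
  · rw [← uIcc_of_le hab] at hf ⊢
    exact continuousOn_primitive_interval hf.integrableOn_uIcc
  · simp [Icc_eq_empty_of_lt hab]

theorem continuousOn_exp_integral {a : ℝ → ℝ} {t₀ t : ℝ} (ht : t₀ ≤ t)
    (ha : ContinuousOn a (Icc t₀ t)) :
    ContinuousOn (fun τ => exp (∫ s in τ..t, a s)) (Icc t₀ t) := by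
  rw [← uIcc_of_le ht] at ha ⊢
  exact continuous_exp.comp_continuousOn (continuousOn_primitive_interval_left ha.integrableOn_uIcc)

theorem eq_integral_exp_integral_mul_of_hasDerivAt {a N y : ℝ → ℝ} {t₀ T : ℝ}
    (ha : ContinuousOn a (Icc t₀ T)) (hN : ContinuousOn N (Icc t₀ T))
    (hy : ContinuousOn y (Icc t₀ T)) (hy₀ : y t₀ = 0)
    (hy' : ∀ t ∈ Ioo t₀ T, HasDerivAt y (a t * y t + N t) t) :
    ∀ t ∈ Icc t₀ T, y t = ∫ τ in t₀..t, exp (∫ s in τ..t, a s) * N τ := by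
  set F := fun t => ∫ s in t₀..t, a s with hF_def
  have hF : ContinuousOn F (Icc t₀ T) := continuousOn_integral_of_continuousOn ha
  have hF' : ∀ t ∈ Ioo t₀ T, HasDerivAt F (a t) t := fun t ht =>
    hasDerivAt_integral_of_continuousOn ha ht
  have hEN : ContinuousOn (fun τ => exp (-F τ) * N τ) (Icc t₀ T) :=
    (continuous_exp.comp_continuousOn hF.neg).mul hN
  set g := fun t => exp (-F t) * y t - ∫ τ in t₀..t, exp (-F τ) * N τ
  have hg : ContinuousOn g (Icc t₀ T) :=
    ((continuous_exp.comp_continuousOn hF.neg).mul hy).sub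
      (continuousOn_integral_of_continuousOn hEN)
  have hg' : ∀ t ∈ Ioo t₀ T, HasDerivAt g 0 t := fun t ht =>
    ((((hF' t ht).fun_neg.exp).mul (hy' t ht)).sub
      (hasDerivAt_integral_of_continuousOn hEN ht)).congr_deriv (by ring)
  intro t ht
  have hgt : g t = 0 := by
    rcases ht.1.eq_or_lt with rfl | htt
    · simp [g, hy₀]
    obtain ⟨c, -, hc⟩ := exists_hasDerivAt_eq_slope g (fun _ => 0) htt
      (hg.mono (Icc_subset_Icc_right ht.2))
      fun x hx => hg' x ⟨hx.1, hx.2.trans_le ht.2⟩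
    rw [eq_comm, div_eq_zero_iff, sub_eq_zero, sub_eq_zero] at hc
    simpa [g, hy₀, htt.ne'] using hc
  have hint : ∀ τ ∈ Icc t₀ t, IntervalIntegrable a volume t₀ τ := fun τ hτ =>
    (ha.mono (Icc_subset_Icc_right (hτ.2.trans ht.2))).intervalIntegrable_of_Icc hτ.1
  calc y t = exp (F t) * ∫ τ in t₀..t, exp (-F τ) * N τ := by
        rw [← sub_eq_zero.1 hgt, ← mul_assoc, ← exp_add, add_neg_cancel, exp_zero, one_mul]
    _ = ∫ τ in t₀..t, exp (∫ s in τ..t, a s) * N τ := by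
        rw [← intervalIntegral.integral_const_mul]
        refine integral_congr fun τ hτ => ?_
        rw [uIcc_of_le ht.1] at hτ
        simp only [hF_def]
        rw [← mul_assoc, ← exp_add, ← sub_eq_add_neg,
          integral_interval_sub_left (hint t (right_mem_Icc.2 ht.1)) (hint τ hτ)]

theorem abs_integral_mul_add_le {k f g : ℝ → ℝ} {a b c : ℝ} (hab : a ≤ b)
    (hk : ContinuousOn k (Icc a b)) (hk₀ : ∀ τ ∈ Icc a b, 0 ≤ k τ)
    (hf : ContinuousOn f (Icc a b)) (hg : ContinuousOn g (Icc a b))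
    (hfc : ∀ τ ∈ Icc a b, |f τ| ≤ c) :
    |∫ τ in a..b, k τ * (f τ + g τ)| ≤ c * (∫ τ in a..b, k τ) + |∫ τ in a..b, k τ * g τ| := by
  have hkf : ‖∫ τ in a..b, k τ * f τ‖ ≤ ∫ τ in a..b, c * k τ := by
    refine norm_integral_le_of_norm_le hab (ae_of_all _ fun τ hτ => ?_)
      ((hk.intervalIntegrable_of_Icc hab).const_mul c)
    have hτ' := Ioc_subset_Icc_self hτ
    rw [Real.norm_eq_abs, abs_mul, abs_of_nonneg (hk₀ τ hτ'), mul_comm]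
    exact mul_le_mul_of_nonneg_right (hfc τ hτ') (hk₀ τ hτ')
  have hkf_int : IntervalIntegrable (fun τ => k τ * f τ) volume a b :=
    (hk.mul hf).intervalIntegrable_of_Icc hab
  have hkg_int : IntervalIntegrable (fun τ => k τ * g τ) volume a b :=
    (hk.mul hg).intervalIntegrable_of_Icc hab
  rw [Real.norm_eq_abs, intervalIntegral.integral_const_mul] at hkf
  simp only [mul_add]
  rw [integral_add hkf_int hkg_int]
  exact (abs_add_le _ _).trans (add_le_add_left hkf _)

theorem integral_exp_neg_mul_sub_le {c t : ℝ} (hc : 0 < c) :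
    ∫ τ in (0:ℝ)..t, exp (-c * (t - τ)) ≤ 1 / c := by
  have hderiv : ∀ τ ∈ uIcc 0 t,
      HasDerivAt (fun τ => exp (-c * (t - τ)) / c) (exp (-c * (t - τ))) τ := fun τ _ =>
    ((((hasDerivAt_id' τ).const_sub t).const_mul (-c)).exp.div_const c).congr_deriv
      (by field_simp)
  rw [integral_eq_sub_of_hasDerivAt hderiv ((by fun_prop : Continuous _).intervalIntegrable _ _),
    sub_self, mul_zero, exp_zero]
  exact sub_le_self _ (by positivity)

theorem bddAbove_range_integral_exp_integral {a : ℝ → ℝ} {T : ℝ} (hT : 0 ≤ T)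
    (ha : ContinuousOn a (Icc 0 T)) :
    BddAbove (range fun t : Icc (0:ℝ) T => ∫ τ in (0:ℝ)..(t:ℝ), exp (∫ s in τ..(t:ℝ), a s)) := by
  obtain ⟨M, hM⟩ := isCompact_Icc.exists_bound_of_continuousOn ha
  have hM₀ : 0 ≤ M := (norm_nonneg _).trans (hM 0 ⟨le_rfl, hT⟩)
  refine ⟨exp (M * T) * T, ?_⟩
  rintro _ ⟨⟨t, ht⟩, rfl⟩
  dsimp only
  have hkernel : ∀ τ ∈ uIoc 0 t, ‖exp (∫ s in τ..t, a s)‖ ≤ exp (M * T) := by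
    intro τ hτ
    rw [uIoc_of_le ht.1] at hτ
    have hI : ‖∫ s in τ..t, a s‖ ≤ M * |t - τ| := by
      refine norm_integral_le_of_norm_le_const fun x hx => hM x ?_
      rw [uIoc_of_le hτ.2] at hx
      exact ⟨hτ.1.le.trans hx.1.le, hx.2.trans ht.2⟩
    rw [Real.norm_eq_abs, abs_of_pos (exp_pos _), exp_le_exp]
    calc ∫ s in τ..t, a s ≤ M * |t - τ| := (Real.le_norm_self _).trans hI
      _ ≤ M * T := by
        gcongr
        rw [abs_of_nonneg (sub_nonneg.2 hτ.2)]
        linarith [hτ.1, ht.2]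
  calc ∫ τ in (0:ℝ)..t, exp (∫ s in τ..t, a s)
      ≤ ‖∫ τ in (0:ℝ)..t, exp (∫ s in τ..t, a s)‖ := Real.le_norm_self _
    _ ≤ exp (M * T) * |t - 0| := norm_integral_le_of_norm_le_const hkernel
    _ ≤ exp (M * T) * T := by
        rw [sub_zero, abs_of_nonneg ht.1]
        exact mul_le_mul_of_nonneg_left ht.2 (exp_pos _).le

theorem abs_mul_sq_sub_cube_sub_le {p x y K m r : ℝ} (hp : |p| ≤ K) (hx : |x| ≤ m)
    (hy : |y| ≤ r) : |p * x ^ 2 - 1 / 3 * x ^ 3 - y| ≤ K * m ^ 2 + m ^ 3 / 3 + r := by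
  have hsq : |p * x ^ 2| ≤ K * m ^ 2 := by
    rw [abs_mul, abs_pow]
    exact mul_le_mul hp (pow_le_pow_left₀ (abs_nonneg x) hx 2) (by positivity)
      ((abs_nonneg p).trans hp)
  have hcube : |1 / 3 * x ^ 3| ≤ m ^ 3 / 3 := by
    rw [abs_mul, abs_pow, abs_of_pos (by norm_num : (0:ℝ) < 1 / 3)]
    linarith [pow_le_pow_left₀ (abs_nonneg x) hx 3]
  exact (abs_sub _ _).trans (add_le_add ((abs_sub _ _).trans (add_le_add hsq hcube)) hy)

theorem forall_le_of_forall_le_imp_lt {u : ℝ → ℝ} {a b δ : ℝ}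
    (hu : ContinuousOn u (Icc a b)) (ha : u a ≤ δ)
    (hstep : ∀ t ∈ Ico a b, (∀ τ ∈ Icc a t, u τ ≤ δ) → u t < δ) :
    ∀ t ∈ Icc a b, u t ≤ δ := by
  have hclosed : IsClosed ({t | u t ≤ δ} ∩ Icc a b) := by
    rw [inter_comm]
    exact hu.preimage_isClosed_of_isClosed isClosed_Icc isClosed_Iic
  refine IsClosed.Icc_subset_of_forall_mem_nhdsGT_of_Icc_subset hclosed ha fun t ht hhist => ?_
  have hlt : ∀ᶠ x in 𝓝[Icc a b] t, u x < δ :=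
    (hu t (Ico_subset_Icc_self ht)).eventually_lt continuousWithinAt_const (hstep t ht hhist)
  have hIcc : Icc a b ∈ 𝓝[>] t :=
    mem_of_superset (Ioo_mem_nhdsGT ht.2) fun x hx => ⟨ht.1.trans hx.1.le, hx.2.le⟩
  exact Eventually.mono (nhdsWithin_le_of_mem hIcc hlt) fun x hx => hx.le

theorem abs_le_of_hasDerivAt_relaxation {ε γ T D m t : ℝ} {h v w : ℝ → ℝ}
    (hε : 0 < ε) (hγ : 0 < γ) (hh : ContinuousOn h (Icc 0 T))
    (hv : ContinuousOn v (Icc 0 T)) (hw : ContinuousOn w (Icc 0 T)) (hw₀ : w 0 = 0)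
    (hw' : ∀ s ∈ Ioo 0 T, HasDerivAt w (ε * (v s - γ * w s) + h s) s)
    (ht : t ∈ Icc 0 T) (hH : |∫ τ in (0:ℝ)..t, exp (-(ε * γ) * (t - τ)) * h τ| ≤ D)
    (hm : ∀ τ ∈ Icc 0 t, |v τ| ≤ m) :
    |w t| ≤ m / γ + D := by
  have hm₀ : 0 ≤ m := (abs_nonneg _).trans (hm 0 ⟨le_rfl, ht.1⟩)
  have hsub : Icc 0 t ⊆ Icc 0 T := Icc_subset_Icc_right ht.2
  have hw_eq : w t = ∫ τ in (0:ℝ)..t, exp (-(ε * γ) * (t - τ)) * (ε * v τ + h τ) := by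
    rw [eq_integral_exp_integral_mul_of_hasDerivAt (a := fun _ => -(ε * γ))
      (N := fun τ => ε * v τ + h τ) continuousOn_const ((continuousOn_const.mul hv).add hh) hw hw₀
      (fun s hs => (hw' s hs).congr_deriv (by ring)) t ht]
    simp only [intervalIntegral.integral_const, smul_eq_mul, mul_comm (t - _)]
  calc |w t| ≤ ε * m * (∫ τ in (0:ℝ)..t, exp (-(ε * γ) * (t - τ))) + D := by
        rw [hw_eq]
        refine (abs_integral_mul_add_le (f := fun τ => ε * v τ) ht.1
          (by fun_prop : Continuous _).continuousOn (fun _ _ => (exp_pos _).le)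
          ((continuousOn_const.mul hv).mono hsub) (hh.mono hsub)
          fun τ hτ => ?_).trans (add_le_add_right hH _)
        rw [abs_mul, abs_of_pos hε]
        exact mul_le_mul_of_nonneg_left (hm τ hτ) hε.le
    _ ≤ ε * m * (1 / (ε * γ)) + D := by
        gcongr
        exact integral_exp_neg_mul_sub_le (by positivity)
    _ = m / γ + D := by field_simp

theorem abs_le_of_error_system {T ε γ K₂ D₁ D₂ δ : ℝ} {a p h₁ h₂ v w : ℝ → ℝ}
    (hε : 0 < ε) (hγ : 1 < γ) (hK₂ : 0 ≤ K₂) (hD₂ : 0 ≤ D₂) (hδ : 0 < δ)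
    (hδK₂ : 2 * γ * (K₂ + 1) * δ ≤ 1) (hD : γ / 2 * D₂ + D₁ ≤ δ / 4)
    (ha : ContinuousOn a (Icc 0 T)) (hp : ContinuousOn p (Icc 0 T))
    (hh₁ : ContinuousOn h₁ (Icc 0 T)) (hh₂ : ContinuousOn h₂ (Icc 0 T))
    (hv : ContinuousOn v (Icc 0 T)) (hw : ContinuousOn w (Icc 0 T))
    (hv₀ : v 0 = 0) (hw₀ : w 0 = 0)
    (hderiv : ∀ t ∈ Ioo 0 T,
      HasDerivAt v (a t * v t + p t * v t ^ 2 - (1 / 3) * v t ^ 3 - w t + h₁ t) t ∧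
      HasDerivAt w (ε * (v t - γ * w t) + h₂ t) t)
    (hA : ∀ t ∈ Icc 0 T, ∫ τ in (0:ℝ)..t, exp (∫ s in τ..t, a s) < γ / 2)
    (hH₁ : ∀ t ∈ Icc 0 T, |∫ τ in (0:ℝ)..t, exp (∫ s in τ..t, a s) * h₁ τ| ≤ D₁)
    (hH₂ : ∀ t ∈ Icc 0 T, |∫ τ in (0:ℝ)..t, exp (-(ε * γ) * (t - τ)) * h₂ τ| ≤ D₂)
    (hpK₂ : ∀ t ∈ Icc 0 T, |p t| ≤ K₂) :
    ∀ t ∈ Icc 0 T, |v t| ≤ δ ∧ |w t| ≤ δ / γ + D₂ := by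
  have hγ₀ : 0 < γ := one_pos.trans hγ
  have hw_le : ∀ t ∈ Icc 0 T, (∀ τ ∈ Icc 0 t, |v τ| ≤ δ) → |w t| ≤ δ / γ + D₂ :=
    fun t ht => abs_le_of_hasDerivAt_relaxation hε hγ₀ hh₂ hv hw hw₀
      (fun s hs => (hderiv s hs).2) ht (hH₂ t ht)
  have hN : ContinuousOn (fun τ => p τ * v τ ^ 2 - 1 / 3 * v τ ^ 3 - w τ) (Icc 0 T) :=
    ((hp.mul (hv.pow 2)).sub (continuousOn_const.mul (hv.pow 3))).sub hw
  have hv_eq := eq_integral_exp_integral_mul_of_hasDerivAt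
    (N := fun τ => p τ * v τ ^ 2 - 1 / 3 * v τ ^ 3 - w τ + h₁ τ) ha (hN.add hh₁) hv hv₀
    fun t ht => (hderiv t ht).1.congr_deriv (by ring)
  have hv_le : ∀ t ∈ Icc 0 T, |v t| ≤ δ := by
    refine forall_le_of_forall_le_imp_lt hv.abs (by simp [hv₀, hδ.le]) fun t ht hhist => ?_
    have ht' : t ∈ Icc 0 T := Ico_subset_Icc_self ht
    have hsub : Icc 0 t ⊆ Icc 0 T := Icc_subset_Icc_right ht'.2
    set X := K₂ * δ ^ 2 + δ ^ 3 / 3 + (δ / γ + D₂) with hX_def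
    have hNX : ∀ τ ∈ Icc 0 t, |p τ * v τ ^ 2 - 1 / 3 * v τ ^ 3 - w τ| ≤ X := fun τ hτ =>
      abs_mul_sq_sub_cube_sub_le (hpK₂ τ (hsub hτ)) (hhist τ hτ)
        (hw_le τ (hsub hτ) fun σ hσ => hhist σ ⟨hσ.1, hσ.2.trans hτ.2⟩)
    have hX : X * (γ / 2) + D₁ ≤ δ := by
      have hγK₂ : 1 ≤ γ * (K₂ + 1) := by nlinarith
      have hδ_half : 2 * δ ≤ 1 := by nlinarith [mul_le_mul_of_nonneg_right hγK₂ hδ.le]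
      have hcubic : δ ^ 3 / 3 ≤ δ ^ 2 := by nlinarith
      have hpoly : γ / 2 * (K₂ * δ ^ 2 + δ ^ 3 / 3) ≤ δ / 4 := by
        nlinarith [mul_le_mul_of_nonneg_left hcubic (by positivity : (0:ℝ) ≤ γ / 2)]
      have hlin : γ / 2 * (δ / γ) = δ / 2 := by field_simp
      rw [hX_def]
      linarith
    calc |v t| ≤ X * (∫ τ in (0:ℝ)..t, exp (∫ s in τ..t, a s)) + D₁ := by
          rw [hv_eq t ht']
          exact (abs_integral_mul_add_le ht'.1 (continuousOn_exp_integral ht'.1 (ha.mono hsub))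
            (fun _ _ => (exp_pos _).le) (hN.mono hsub) (hh₁.mono hsub) hNX).trans
            (add_le_add_right (hH₁ t ht') _)
      _ < X * (γ / 2) + D₁ := by
          have : 0 < X := by positivity
          gcongr
          exact hA t ht'
      _ ≤ δ := hX
  exact fun t ht => ⟨hv_le t ht, hw_le t ht fun τ hτ => hv_le τ ⟨hτ.1, hτ.2.trans ht.2⟩⟩

theorem stmt_9_general (T ω₀ ε γ : ℝ) (hT : 0 < T) (hω₀ : 0 < ω₀)
    (hε : 0 < ε) (hγ : 1 < γ)
    (φs φf φ₂ H₁ H₂ : ℝ → ℝ → ℝ) (Ev Ew : ℝ → ℝ → ℝ)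
    (C₁ C₂ K₂ : ℝ) (hC₁ : 0 < C₁) (hC₂ : 0 < C₂) (hK₂ : 0 < K₂)
    (hcont : ∀ ω : ℝ, ω₀ ≤ ω →
      ContinuousOn (φs ω) (Icc 0 T) ∧ ContinuousOn (φf ω) (Icc 0 T) ∧
      ContinuousOn (φ₂ ω) (Icc 0 T) ∧ ContinuousOn (H₁ ω) (Icc 0 T) ∧
      ContinuousOn (H₂ ω) (Icc 0 T))
    (h1 : ∀ ω : ℝ, ω₀ ≤ ω →
      (1 / γ) * (⨆ t : Icc (0:ℝ) T,
        ∫ τ in (0:ℝ)..(t : ℝ), Real.exp (∫ s in τ..(t : ℝ), (φs ω s + φf ω s))) < 1 / 2)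
    (h2 : ∀ ω : ℝ, ω₀ ≤ ω → ∀ t ∈ Icc (0:ℝ) T,
      |∫ τ in (0:ℝ)..t, Real.exp (∫ s in τ..t, (φs ω s + φf ω s)) * H₁ ω τ| ≤ C₁ / ω)
    (h3 : ∀ ω : ℝ, ω₀ ≤ ω → ∀ t ∈ Icc (0:ℝ) T,
      |∫ τ in (0:ℝ)..t, Real.exp (-(ε * γ) * (t - τ)) * H₂ ω τ| ≤ C₂ / ω)
    (h4 : ∀ ω : ℝ, ω₀ ≤ ω → ∀ t ∈ Icc (0:ℝ) T, |φ₂ ω t| ≤ K₂)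
    (hE : ∀ ω : ℝ, ω₀ ≤ ω →
      ContinuousOn (Ev ω) (Icc 0 T) ∧ ContinuousOn (Ew ω) (Icc 0 T) ∧
      Ev ω 0 = 0 ∧ Ew ω 0 = 0 ∧
      ∀ t ∈ Ioo (0:ℝ) T,
        HasDerivAt (Ev ω) ((φs ω t + φf ω t) * Ev ω t + φ₂ ω t * Ev ω t ^ 2
          - (1 / 3) * Ev ω t ^ 3 - Ew ω t + H₁ ω t) t ∧
        HasDerivAt (Ew ω) (ε * (Ev ω t - γ * Ew ω t) + H₂ ω t) t) :
    ∃ ωStar : ℝ, ω₀ ≤ ωStar ∧ ∃ C > (0:ℝ), ∀ ω : ℝ, ωStar ≤ ω →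
      ∀ t ∈ Ioo (0:ℝ) T, |Ev ω t| ≤ C / ω ∧ |Ew ω t| ≤ C / ω := by
  have hγ₀ : 0 < γ := one_pos.trans hγ
  set B := 2 * γ * C₂ + 4 * C₁ with hB
  refine ⟨max ω₀ (2 * γ * (K₂ + 1) * B), le_max_left _ _, B + C₂, by positivity,
    fun ω hω t ht => ?_⟩
  have hω₀ω : ω₀ ≤ ω := (le_max_left _ _).trans hω
  have hω_pos : 0 < ω := hω₀.trans_le hω₀ω
  obtain ⟨hφs, hφf, hφ₂, hH₁, hH₂⟩ := hcont ω hω₀ω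
  obtain ⟨hEv, hEw, hEv₀, hEw₀, hderiv⟩ := hE ω hω₀ω
  have hA : ∀ t ∈ Icc 0 T, ∫ τ in (0:ℝ)..t, exp (∫ s in τ..t, (φs ω s + φf ω s)) < γ / 2 :=
    fun t ht => by
      have hsup := h1 ω hω₀ω
      rw [one_div_mul_eq_div, div_lt_iff₀ hγ₀] at hsup
      have := le_ciSup (bddAbove_range_integral_exp_integral
        (a := fun s => φs ω s + φf ω s) hT.le (hφs.add hφf)) ⟨t, ht⟩
      linarith
  have hδK₂ : 2 * γ * (K₂ + 1) * (B / ω) ≤ 1 := by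
    rw [mul_div_assoc', div_le_one hω_pos]
    exact (le_max_right _ _).trans hω
  have hD : γ / 2 * (C₂ / ω) + C₁ / ω ≤ B / ω / 4 := by
    rw [hB]
    apply le_of_eq
    field_simp
    ring
  obtain ⟨hv, hw⟩ := abs_le_of_error_system (a := fun s => φs ω s + φf ω s) hε hγ hK₂.le
    (by positivity) (by positivity) hδK₂ hD (hφs.add hφf) hφ₂ hH₁ hH₂ hEv hEw hEv₀ hEw₀ hderiv
    hA (h2 ω hω₀ω) (h3 ω hω₀ω) (h4 ω hω₀ω) t (Ioo_subset_Icc_self ht)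
  refine ⟨hv.trans ?_, hw.trans ?_⟩
  · gcongr
    linarith
  · have : B / ω / γ ≤ B / ω := div_le_self (by positivity) hγ.le
    rw [add_div B]
    linarith

/-- **Lemma (Estimate for the general approximation-error equation).** -/
theorem stmt_9 (T ω₀ ε β γ ρ : ℝ) (hT : 0 < T) (hω₀ : 0 < ω₀)
    (hε : 0 < ε) (hβ : 0 < β) (hγ : 1 < γ)
    (φs φf φ₂ H₁ H₂ : ℝ → ℝ → ℝ) (Ev Ew : ℝ → ℝ → ℝ)
    (C₁ C₂ K₂ : ℝ) (hC₁ : 0 < C₁) (hC₂ : 0 < C₂) (hK₂ : 0 < K₂)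
    (hcont : ∀ ω : ℝ, ω₀ ≤ ω →
      ContinuousOn (φs ω) (Icc 0 T) ∧ ContinuousOn (φf ω) (Icc 0 T) ∧
      ContinuousOn (φ₂ ω) (Icc 0 T) ∧ ContinuousOn (H₁ ω) (Icc 0 T) ∧
      ContinuousOn (H₂ ω) (Icc 0 T))
    (h1 : ∀ ω : ℝ, ω₀ ≤ ω →
      (1 / γ) * (⨆ t : Icc (0:ℝ) T,
        ∫ τ in (0:ℝ)..(t : ℝ), Real.exp (∫ s in τ..(t : ℝ), (φs ω s + φf ω s))) < 1 / 2)
    (h2 : ∀ ω : ℝ, ω₀ ≤ ω → ∀ t ∈ Icc (0:ℝ) T,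
      |∫ τ in (0:ℝ)..t, Real.exp (∫ s in τ..t, (φs ω s + φf ω s)) * H₁ ω τ| ≤ C₁ / ω)
    (h3 : ∀ ω : ℝ, ω₀ ≤ ω → ∀ t ∈ Icc (0:ℝ) T,
      |∫ τ in (0:ℝ)..t, Real.exp (-(ε * γ) * (t - τ)) * H₂ ω τ| ≤ C₂ / ω)
    (h4 : ∀ ω : ℝ, ω₀ ≤ ω → ∀ t ∈ Icc (0:ℝ) T, |φ₂ ω t| ≤ K₂)
    (hE : ∀ ω : ℝ, ω₀ ≤ ω →
      ContinuousOn (Ev ω) (Icc 0 T) ∧ ContinuousOn (Ew ω) (Icc 0 T) ∧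
      Ev ω 0 = 0 ∧ Ew ω 0 = 0 ∧
      ∀ t ∈ Ioo (0:ℝ) T,
        HasDerivAt (Ev ω) ((φs ω t + φf ω t) * Ev ω t + φ₂ ω t * Ev ω t ^ 2
          - (1 / 3) * Ev ω t ^ 3 - Ew ω t + H₁ ω t) t ∧
        HasDerivAt (Ew ω) (ε * (Ev ω t - γ * Ew ω t) + H₂ ω t) t) :
    ∃ ωStar : ℝ, ω₀ ≤ ωStar ∧ ∃ C > (0:ℝ), ∀ ω : ℝ, ωStar ≤ ω →
      ∀ t ∈ Ioo (0:ℝ) T, |Ev ω t| ≤ C / ω ∧ |Ew ω t| ≤ C / ω :=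
  stmt_9_general T ω₀ ε γ hT hω₀ hε hγ φs φf φ₂ H₁ H₂ Ev Ew C₁ C₂ K₂ hC₁ hC₂ hK₂ hcont h1 h2 h3 h4
    hE
end

section
/- Let T > 0, 0 ≤ a ≤ t ≤ T, ω > 0, and let f ∈ C¹([0,T];ℝ). Then |∫_a^t f(τ) e^{iωτ} dτ| ≤ (1/ω)·min{(t−a)ω, 2}·max_{τ∈[a,t]} |f(τ)| + ((t−a)/ω)·max_{τ∈[a,t]} |f′(τ)|. -/
open Set Complex intervalIntegral

/-- **Lemma (Integral estimate for slowly varying functions).**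
For `f ∈ C¹([0,T])`, `0 ≤ a ≤ t ≤ T` and `ω > 0`,
`|∫_a^t f(τ) e^{iωτ} dτ| ≤ (1/ω)·min{(t−a)ω, 2}·max_{[a,t]}|f| + ((t−a)/ω)·max_{[a,t]}|f′|`. -/
theorem stmt_10 (T a t ω : ℝ) (hT : 0 < T) (ha : 0 ≤ a) (hat : a ≤ t) (htT : t ≤ T)
    (hω : 0 < ω) (f f' : ℝ → ℝ)
    (hf : ∀ τ ∈ Icc (0:ℝ) T, HasDerivWithinAt f (f' τ) (Icc (0:ℝ) T) τ)
    (hf' : ContinuousOn f' (Icc 0 T)) :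
    ‖∫ τ in a..t, (f τ : ℂ) * Complex.exp (Complex.I * (ω : ℂ) * (τ : ℂ))‖ ≤
      (1 / ω) * min ((t - a) * ω) 2 * (⨆ τ : Icc a t, |f (τ : ℝ)|) +
      ((t - a) / ω) * (⨆ τ : Icc a t, |f' (τ : ℝ)|) := by
  have hsub : Icc a t ⊆ Icc (0:ℝ) T := Icc_subset_Icc ha htT
  have hfc : ContinuousOn f (Icc (0:ℝ) T) := fun x hx => (hf x hx).continuousWithinAt
  -- sup facts
  set M : ℝ := ⨆ τ : Icc a t, |f (τ : ℝ)| with hM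
  set M' : ℝ := ⨆ τ : Icc a t, |f' (τ : ℝ)| with hM'
  have hne : (Icc a t).Nonempty := nonempty_Icc.2 hat
  have bdd_of_cont : ∀ g : ℝ → ℝ, ContinuousOn g (Icc (0:ℝ) T) →
      BddAbove (Set.range fun τ : Icc a t => |g (τ : ℝ)|) := by
    intro g hg
    obtain ⟨C, hC⟩ := (isCompact_Icc.image_of_continuousOn
      ((hg.mono hsub).abs)).bddAbove
    refine ⟨C, ?_⟩
    rintro y ⟨τ, rfl⟩
    exact hC ⟨τ, τ.2, rfl⟩
  have hle : ∀ τ ∈ Icc a t, |f τ| ≤ M :=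
    fun τ hτ => le_ciSup (bdd_of_cont f hfc) (⟨τ, hτ⟩ : Icc a t)
  have hle' : ∀ τ ∈ Icc a t, |f' τ| ≤ M' :=
    fun τ hτ => le_ciSup (bdd_of_cont f' hf') (⟨τ, hτ⟩ : Icc a t)
  have hM0 : 0 ≤ M := le_trans (abs_nonneg _) (hle a (left_mem_Icc.2 hat))
  have hM'0 : 0 ≤ M' := le_trans (abs_nonneg _) (hle' a (left_mem_Icc.2 hat))
  -- norm of the exponential
  have hexpnorm : ∀ τ : ℝ, ‖Complex.exp (Complex.I * (ω : ℂ) * (τ : ℂ))‖ = 1 := by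
    intro τ
    have : Complex.I * (ω : ℂ) * (τ : ℂ) = ((ω * τ : ℝ) : ℂ) * Complex.I := by
      push_cast; ring
    rw [this]
    exact Complex.norm_exp_ofReal_mul_I _
  rcases le_total ((t - a) * ω) 2 with hmin | hmin
  · -- small interval: trivial bound
    rw [min_eq_left hmin]
    have h1 : ‖∫ τ in a..t, (f τ : ℂ) * Complex.exp (Complex.I * (ω : ℂ) * (τ : ℂ))‖ ≤
        M * |t - a| := by
      apply intervalIntegral.norm_integral_le_of_norm_le_const
      intro x hx
      rw [Set.uIoc_of_le hat] at hx
      have hx' : x ∈ Icc a t := ⟨le_of_lt hx.1, hx.2⟩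
      rw [norm_mul, hexpnorm, mul_one, Complex.norm_real, Real.norm_eq_abs]
      exact hle x hx'
    have h2 : (1 / ω) * ((t - a) * ω) * M = (t - a) * M := by field_simp
    rw [h2]
    have : M * |t - a| = (t - a) * M := by
      rw [_root_.abs_of_nonneg (show (0:ℝ) ≤ t - a by linarith)]; ring
    rw [this] at h1
    have h3 : 0 ≤ ((t - a) / ω) * M' :=
      mul_nonneg (div_nonneg (by linarith) hω.le) hM'0
    linarith
  · -- large interval: integration by parts
    rw [min_eq_right hmin]
    set c : ℂ := Complex.I * (ω : ℂ) with hc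
    have hc0 : c ≠ 0 := by
      simp [hc, Complex.I_ne_zero, Complex.ofReal_ne_zero, hω.ne']
    have hcnorm : ‖c‖ = ω := by
      simp [hc, Complex.norm_real, abs_of_pos hω]
    set v : ℝ → ℂ := fun τ => Complex.exp (c * τ) / c with hv
    have hvderiv : ∀ x : ℝ, HasDerivAt v (Complex.exp (c * x)) x := by
      intro x
      have h1 : HasDerivAt (fun y : ℝ => c * (y : ℂ)) c x := by
        simpa using (Complex.ofRealCLM.hasDerivAt (x := x)).const_mul c
      have h2 : HasDerivAt (fun y : ℝ => Complex.exp (c * y)) (Complex.exp (c * x) * c) x :=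
        (Complex.hasDerivAt_exp (c * x)).comp x h1
      have h3 := h2.div_const c
      have : Complex.exp (c * x) * c / c = Complex.exp (c * x) := by
        field_simp
      rwa [this] at h3
    have hvnorm : ∀ τ : ℝ, ‖v τ‖ = 1 / ω := by
      intro τ
      rw [hv]
      simp only [norm_div, hcnorm]
      rw [hexpnorm τ]
    have huIcc : Set.uIcc a t = Icc a t := Set.uIcc_of_le hat
    have ibp := intervalIntegral.integral_mul_deriv_eq_deriv_mul_of_hasDerivWithinAt
      (a := a) (b := t)
      (u := fun τ => ((f τ : ℝ) : ℂ)) (u' := fun τ => ((f' τ : ℝ) : ℂ))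
      (v := v) (v' := fun τ => Complex.exp (c * τ))
      (fun x hx => by
        rw [huIcc] at hx ⊢
        exact Complex.ofRealCLM.hasFDerivAt.comp_hasDerivWithinAt x
          (((hf x (hsub hx)).mono hsub)))
      (fun x hx => (hvderiv x).hasDerivWithinAt)
      (by
        apply ContinuousOn.intervalIntegrable
        rw [huIcc]
        exact Complex.continuous_ofReal.comp_continuousOn (hf'.mono hsub))
      (by
        apply Continuous.intervalIntegrable
        exact Complex.continuous_exp.comp (continuous_const.mul Complex.continuous_ofReal))
    have key : (∫ τ in a..t, (f τ : ℂ) * Complex.exp (Complex.I * (ω : ℂ) * (τ : ℂ))) =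
        (f t : ℂ) * v t - (f a : ℂ) * v a - ∫ x in a..t, (f' x : ℂ) * v x := by
      rw [← ibp]
    rw [key]
    have hbt : ‖(f t : ℂ) * v t‖ ≤ M * (1 / ω) := by
      rw [norm_mul, hvnorm, Complex.norm_real, Real.norm_eq_abs]
      exact mul_le_mul_of_nonneg_right (hle t (right_mem_Icc.2 hat)) (by positivity)
    have hba : ‖(f a : ℂ) * v a‖ ≤ M * (1 / ω) := by
      rw [norm_mul, hvnorm, Complex.norm_real, Real.norm_eq_abs]
      exact mul_le_mul_of_nonneg_right (hle a (left_mem_Icc.2 hat)) (by positivity)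
    have hint : ‖∫ x in a..t, (f' x : ℂ) * v x‖ ≤ (M' * (1 / ω)) * |t - a| := by
      apply intervalIntegral.norm_integral_le_of_norm_le_const
      intro x hx
      rw [Set.uIoc_of_le hat] at hx
      have hx' : x ∈ Icc a t := ⟨le_of_lt hx.1, hx.2⟩
      rw [norm_mul, hvnorm, Complex.norm_real, Real.norm_eq_abs]
      exact mul_le_mul_of_nonneg_right (hle' x hx') (by positivity)
    have htri : ‖(f t : ℂ) * v t - (f a : ℂ) * v a - ∫ x in a..t, (f' x : ℂ) * v x‖ ≤
        ‖(f t : ℂ) * v t‖ + ‖(f a : ℂ) * v a‖ + ‖∫ x in a..t, (f' x : ℂ) * v x‖ := by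
      calc _ ≤ ‖(f t : ℂ) * v t - (f a : ℂ) * v a‖ + ‖∫ x in a..t, (f' x : ℂ) * v x‖ :=
            norm_sub_le _ _
        _ ≤ _ := by gcongr; exact norm_sub_le _ _
    have habs : |t - a| = t - a := _root_.abs_of_nonneg (by linarith)
    rw [habs] at hint
    have h2 : (1 / ω) * 2 * M = M * (1 / ω) + M * (1 / ω) := by ring
    have h3 : ((t - a) / ω) * M' = (M' * (1 / ω)) * (t - a) := by ring
    rw [h2, h3]
    linarith
end

section
/- Let β > 0, γ ≥ 1, I₀ ≥ 0, η > 0, and ρ with ρ² < 4/3, and let α, σ ∈ [0,1]. Suppose β/γ ≥ I₀, suppose 2 − (3/2)ρ² > (3 + 1/η)/γ, and suppose that the cubic f(x) = x³ − 3(1 − α²ρ²/2 − 1/γ)x + 3β/γ − 3σI₀ has a unique real root x₀. Then −max{√3, β} ≤ x₀ < −(1 + 1/(ηγ))^{1/2}; consequently x₀² − 1 + α²ρ²/2 ≥ 1/(ηγ) > 0. -/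
open Set

set_option maxHeartbeats 1600000 in
/-- **Lemma (Bounds on the unique real root of the depressed cubic
`f(x) = x³ − 3(1 − α²ρ²/2 − 1/γ)x + 3β/γ − 3σI₀`).**
Under the stated conditions, `−max{√3, β} ≤ x₀ < −(1 + 1/(ηγ))^{1/2}`, and
consequently `x₀² − 1 + α²ρ²/2 ≥ 1/(ηγ) > 0`. -/
theorem stmt_19 (β γ I₀ η ρ α σ x₀ : ℝ)
    (hβ : 0 < β) (hγ : 1 ≤ γ) (hI₀ : 0 ≤ I₀) (hη : 0 < η)
    (hρ : ρ ^ 2 < 4 / 3) (hα : α ∈ Icc (0:ℝ) 1) (hσ : σ ∈ Icc (0:ℝ) 1)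
    (hβγ : I₀ ≤ β / γ) (hgap : (3 + 1 / η) / γ < 2 - (3 / 2) * ρ ^ 2)
    (hroot : x₀ ^ 3 - 3 * (1 - α ^ 2 * ρ ^ 2 / 2 - 1 / γ) * x₀
        + 3 * β / γ - 3 * σ * I₀ = 0)
    (huniq : ∀ y : ℝ, y ^ 3 - 3 * (1 - α ^ 2 * ρ ^ 2 / 2 - 1 / γ) * y
        + 3 * β / γ - 3 * σ * I₀ = 0 → y = x₀) :
    -max (Real.sqrt 3) β ≤ x₀ ∧ x₀ < -Real.sqrt (1 + 1 / (η * γ)) ∧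
      1 / (η * γ) ≤ x₀ ^ 2 - 1 + α ^ 2 * ρ ^ 2 / 2 ∧ 0 < 1 / (η * γ) := by
  have hγ0 : (0:ℝ) < γ := lt_of_lt_of_le one_pos hγ
  have hηγ : (0:ℝ) < 1 / (η * γ) := by positivity
  set g : ℝ → ℝ := fun y => y ^ 3 - 3 * (1 - α ^ 2 * ρ ^ 2 / 2 - 1 / γ) * y
      + 3 * β / γ - 3 * σ * I₀ with hg
  clear_value g
  have hgc : Continuous g := by rw [hg]; fun_prop
  set s : ℝ := Real.sqrt (1 + 1 / (η * γ)) with hs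
  set M : ℝ := max (Real.sqrt 3) β with hM
  have hs0 : 0 < s := hs ▸ Real.sqrt_pos.mpr (by linarith)
  have hs2 : s ^ 2 = 1 + 1 / (η * γ) := hs ▸ Real.sq_sqrt (by linarith)
  have hM3 : Real.sqrt 3 ≤ M := hM ▸ le_max_left _ _
  have hMβ : β ≤ M := hM ▸ le_max_right _ _
  clear_value s M
  have hM0 : 0 < M := lt_of_lt_of_le hβ hMβ
  have hM2 : 3 ≤ M ^ 2 := by
    have h1 := Real.sqrt_nonneg 3
    have h2 : Real.sqrt 3 ^ 2 = 3 := Real.sq_sqrt (by norm_num)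
    nlinarith
  have hα2 : α ^ 2 ≤ 1 := by nlinarith [hα.1, hα.2]
  have hρ2 : 0 ≤ ρ ^ 2 := sq_nonneg ρ
  have hprod : α ^ 2 * ρ ^ 2 ≤ ρ ^ 2 := mul_le_of_le_one_left hρ2 hα2
  -- rewrite hgap with separated atoms
  have hgap' : 3 * (1 / γ) + 1 / (η * γ) < 2 - (3 / 2) * ρ ^ 2 := by
    have heq : (3 + 1 / η) / γ = 3 * (1 / γ) + 1 / (η * γ) := by
      field_simp
    linarith [heq ▸ hgap]
  -- key: s² < 3p
  have hkey : s ^ 2 < 3 * (1 - α ^ 2 * ρ ^ 2 / 2 - 1 / γ) := by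
    rw [hs2]; linarith
  -- constant term nonneg
  have hc : 0 ≤ 3 * β / γ - 3 * σ * I₀ := by
    have h1 : σ * I₀ ≤ I₀ := by nlinarith [hσ.1, hσ.2]
    have h4 : 3 * (β / γ) = 3 * β / γ := by ring
    nlinarith
  -- g(-s) > 0
  have hgs : 0 < g (-s) := by
    have h1 : g (-s) = s * (3 * (1 - α ^ 2 * ρ ^ 2 / 2 - 1 / γ) - s ^ 2)
        + (3 * β / γ - 3 * σ * I₀) := by
      simp only [hg]; ring
    rw [h1]
    have h2 := mul_pos hs0 (by linarith only [hkey] : 0 < 3 * (1 - α ^ 2 * ρ ^ 2 / 2 - 1 / γ) - s ^ 2)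
    linarith only [h2, hc]
  -- g(-M) ≤ 0
  have hgM : g (-M) ≤ 0 := by
    have h1 : 3 * (1 / γ) ≤ M ^ 2 - 3 * (1 - α ^ 2 * ρ ^ 2 / 2 - 1 / γ) := by
      have : 0 ≤ α ^ 2 * ρ ^ 2 := by positivity
      linarith
    have h3 : (0:ℝ) < 3 * (1 / γ) := by positivity
    have h2 : β * (3 * (1 / γ)) ≤ M * (M ^ 2 - 3 * (1 - α ^ 2 * ρ ^ 2 / 2 - 1 / γ)) :=
      mul_le_mul hMβ h1 h3.le hM0.le
    have h4 : β * (3 * (1 / γ)) = 3 * β / γ := by ring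
    have h5 : 0 ≤ 3 * σ * I₀ := by
      have := hσ.1
      nlinarith
    have h6 : g (-M) = -(M * (M ^ 2 - 3 * (1 - α ^ 2 * ρ ^ 2 / 2 - 1 / γ)))
        + (3 * β / γ - 3 * σ * I₀) := by
      simp only [hg]; ring
    rw [h6]
    linarith only [h2, h4, h5]
  -- s < M
  have hsM : -M ≤ -s := by
    have h1 : s ^ 2 < M ^ 2 := by
      rw [hs2]
      have : 1 / (η * γ) < 2 := by
        have h2 : (0:ℝ) < 3 * (1 / γ) := by positivity
        nlinarith
      linarith
    nlinarith
  -- IVT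
  obtain ⟨y, hy, hy0⟩ : ∃ y ∈ Icc (-M) (-s), g y = 0 := by
    have h1 := intermediate_value_Icc hsM hgc.continuousOn
    have h0 : (0:ℝ) ∈ Icc (g (-M)) (g (-s)) := ⟨hgM, hgs.le⟩
    obtain ⟨y, hy, hy0⟩ := h1 h0
    exact ⟨y, hy, hy0⟩
  have hy0' : y ^ 3 - 3 * (1 - α ^ 2 * ρ ^ 2 / 2 - 1 / γ) * y
      + 3 * β / γ - 3 * σ * I₀ = 0 := by
    rw [hg] at hy0
    simpa using hy0
  have hyx : y = x₀ := huniq y hy0'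
  have hx1 : -M ≤ x₀ := hyx ▸ hy.1
  have hx2 : x₀ ≤ -s := hyx ▸ hy.2
  have hgx : g x₀ = 0 := hyx ▸ hy0
  have hx2' : x₀ < -s := lt_of_le_of_ne hx2 (by
    intro h
    rw [h] at hgx
    exact hgs.ne' hgx)
  refine ⟨hx1, hs ▸ hx2', ?_, hηγ⟩
  have hx2sq : s ^ 2 < x₀ ^ 2 := by nlinarith
  have : 0 ≤ α ^ 2 * ρ ^ 2 := by positivity
  rw [hs2] at hx2sq
  linarith
end
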